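/- Let r = (r¹,r²,r³) : U → ℝ³ be an arbitrary smooth map on an open set U ⊆ ℝ² (not assumed to solve any equation). Define A f := e^{r²−r¹} f_x, B f := f_t + (r¹+r²) f_x, E¹ := r¹_t + V¹ r¹_x, E² := r²_t + V² r²_x, E³ := r³_t + V³ r³_x, and ω⁰ := r³, ω^{j+1} := A ω^j. Then for every κ ∈ ℕ₀: B ω^κ = A^κ E³ + Σ_{κ'=0}^{κ−1} A^{κ'}((E² − E¹) ω^{κ−κ'}) pointwise on U. -/

import Mathlib

/- STATEMENT 3: for an arbitrary smooth map r, the identity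
B ω^κ = A^κ E³ + Σ_{κ'=0}^{κ−1} A^{κ'}((E² − E¹) ω^{κ−κ'}) holds pointwise. -/

noncomputable section

/-- Partial derivative with respect to the first ("time") variable. -/
def pt (f : ℝ × ℝ → ℝ) (p : ℝ × ℝ) : ℝ := fderiv ℝ f p (1, 0)

/-- Partial derivative with respect to the second ("space") variable. -/
def px (f : ℝ × ℝ → ℝ) (p : ℝ × ℝ) : ℝ := fderiv ℝ f p (0, 1)

/-- The operator A f := e^{r²−r¹} f_x. -/
def Aop (r₁ r₂ : ℝ × ℝ → ℝ) (g : ℝ × ℝ → ℝ) : ℝ × ℝ → ℝ :=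
  fun p => Real.exp (r₂ p - r₁ p) * px g p

/-- The operator B f := f_t + (r¹+r²) f_x. -/
def Bop (r₁ r₂ : ℝ × ℝ → ℝ) (g : ℝ × ℝ → ℝ) : ℝ × ℝ → ℝ :=
  fun p => pt g p + (r₁ p + r₂ p) * px g p

/-- ω⁰ := r³, ω^{j+1} := A ω^j = e^{r²−r¹} ∂_x ω^j. -/
def omegaFun (r₁ r₂ r₃ : ℝ × ℝ → ℝ) : ℕ → ℝ × ℝ → ℝ
  | 0 => r₃
  | j + 1 => Aop r₁ r₂ (omegaFun r₁ r₂ r₃ j)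

def D (v : ℝ × ℝ) (f : ℝ × ℝ → ℝ) (p : ℝ × ℝ) : ℝ := fderiv ℝ f p v

lemma contDiffOn_D {U : Set (ℝ×ℝ)} (hU : IsOpen U) {f : ℝ×ℝ→ℝ}
    (hf : ContDiffOn ℝ (⊤ : ℕ∞) f U) (v : ℝ×ℝ) : ContDiffOn ℝ (⊤ : ℕ∞) (D v f) U :=
  (hf.fderiv_of_isOpen hU (by simp)).clm_apply contDiffOn_const

lemma diffAt {U : Set (ℝ×ℝ)} (hU : IsOpen U) {f : ℝ×ℝ→ℝ}
    (hf : ContDiffOn ℝ (⊤ : ℕ∞) f U) {p : ℝ×ℝ} (hp : p ∈ U) : DifferentiableAt ℝ f p :=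
  (hf.contDiffAt (hU.mem_nhds hp)).differentiableAt (by simp)

lemma D_add {f g : ℝ×ℝ→ℝ} {p : ℝ×ℝ} (hf : DifferentiableAt ℝ f p)
    (hg : DifferentiableAt ℝ g p) (v) :
    D v (fun q => f q + g q) p = D v f p + D v g p := by
  rw [D, fderiv_fun_add hf hg]; rfl

lemma D_sub {f g : ℝ×ℝ→ℝ} {p : ℝ×ℝ} (hf : DifferentiableAt ℝ f p)
    (hg : DifferentiableAt ℝ g p) (v) :
    D v (fun q => f q - g q) p = D v f p - D v g p := by
  rw [D, fderiv_fun_sub hf hg]; rfl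

lemma D_mul {f g : ℝ×ℝ→ℝ} {p : ℝ×ℝ} (hf : DifferentiableAt ℝ f p)
    (hg : DifferentiableAt ℝ g p) (v) :
    D v (fun q => f q * g q) p = D v f p * g p + f p * D v g p := by
  simp [D, fderiv_fun_mul hf hg]; ring

lemma D_exp {f : ℝ×ℝ→ℝ} {p : ℝ×ℝ} (hf : DifferentiableAt ℝ f p) (v) :
    D v (fun q => Real.exp (f q)) p = Real.exp (f p) * D v f p := by
  have := (Real.hasDerivAt_exp (f p)).comp_hasFDerivAt p hf.hasFDerivAt
  rw [D, show (fun q => Real.exp (f q)) = Real.exp ∘ f from rfl, this.fderiv]; rfl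

lemma D_sum {ι : Type*} {s : Finset ι} {A : ι → ℝ×ℝ→ℝ} {p : ℝ×ℝ}
    (h : ∀ i ∈ s, DifferentiableAt ℝ (A i) p) (v) :
    D v (fun q => ∑ i ∈ s, A i q) p = ∑ i ∈ s, D v (A i) p := by
  simp [D, fderiv_fun_sum h]

lemma D_congr_nhds {f g : ℝ×ℝ→ℝ} {p : ℝ×ℝ} (h : f =ᶠ[nhds p] g) (v) :
    D v f p = D v g p := by
  simp only [D, h.fderiv_eq]

lemma D_comm {U : Set (ℝ×ℝ)} (hU : IsOpen U) {f : ℝ×ℝ→ℝ}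
    (hf : ContDiffOn ℝ (⊤ : ℕ∞) f U) {p : ℝ×ℝ} (hp : p ∈ U) (v w : ℝ×ℝ) :
    D v (D w f) p = D w (D v f) p := by
  have hev : ∀ᶠ y in nhds p, HasFDerivAt f (fderiv ℝ f y) y := by
    filter_upwards [hU.mem_nhds hp] with y hy using (diffAt hU hf hy).hasFDerivAt
  have h1 : ContDiffOn ℝ (⊤ : ℕ∞) (fderiv ℝ f) U := hf.fderiv_of_isOpen hU (by simp)
  have h2 : DifferentiableAt ℝ (fderiv ℝ f) p :=
    (h1.contDiffAt (hU.mem_nhds hp)).differentiableAt (by simp)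
  have hsym := second_derivative_symmetric_of_eventually hev h2.hasFDerivAt
  have key : ∀ u z : ℝ×ℝ, D u (D z f) p = fderiv ℝ (fderiv ℝ f) p u z := by
    intro u z
    have heq : D z f = fun q => (ContinuousLinearMap.apply ℝ ℝ z) (fderiv ℝ f q) := rfl
    rw [D, heq, show (fun q => (ContinuousLinearMap.apply ℝ ℝ z) (fderiv ℝ f q))
        = (ContinuousLinearMap.apply ℝ ℝ z) ∘ (fderiv ℝ f) from rfl,
      (((ContinuousLinearMap.apply ℝ ℝ z).hasFDerivAt).comp p h2.hasFDerivAt).fderiv]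
    rfl
  rw [key, key, hsym]

section main
variable {U : Set (ℝ×ℝ)} {r₁ r₂ r₃ : ℝ×ℝ→ℝ}

lemma contDiffOn_e (hr₁ : ContDiffOn ℝ (⊤ : ℕ∞) r₁ U) (hr₂ : ContDiffOn ℝ (⊤ : ℕ∞) r₂ U) :
    ContDiffOn ℝ (⊤ : ℕ∞) (fun p => Real.exp (r₂ p - r₁ p)) U :=
  Real.contDiff_exp.comp_contDiffOn (hr₂.sub hr₁)

lemma contDiffOn_Aop (hU : IsOpen U) (hr₁ : ContDiffOn ℝ (⊤ : ℕ∞) r₁ U) (hr₂ : ContDiffOn ℝ (⊤ : ℕ∞) r₂ U)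
    {g : ℝ×ℝ→ℝ} (hg : ContDiffOn ℝ (⊤ : ℕ∞) g U) : ContDiffOn ℝ (⊤ : ℕ∞) (Aop r₁ r₂ g) U :=
  (contDiffOn_e hr₁ hr₂).mul (contDiffOn_D hU hg (0,1))

lemma contDiffOn_iterA (hU : IsOpen U) (hr₁ : ContDiffOn ℝ (⊤ : ℕ∞) r₁ U) (hr₂ : ContDiffOn ℝ (⊤ : ℕ∞) r₂ U)
    {g : ℝ×ℝ→ℝ} (hg : ContDiffOn ℝ (⊤ : ℕ∞) g U) (n : ℕ) :
    ContDiffOn ℝ (⊤ : ℕ∞) ((Aop r₁ r₂)^[n] g) U := by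
  induction n with
  | zero => exact hg
  | succ n ih => rw [Function.iterate_succ_apply']; exact contDiffOn_Aop hU hr₁ hr₂ ih

lemma contDiffOn_omega (hU : IsOpen U) (hr₁ : ContDiffOn ℝ (⊤ : ℕ∞) r₁ U) (hr₂ : ContDiffOn ℝ (⊤ : ℕ∞) r₂ U)
    (hr₃ : ContDiffOn ℝ (⊤ : ℕ∞) r₃ U) (n : ℕ) : ContDiffOn ℝ (⊤ : ℕ∞) (omegaFun r₁ r₂ r₃ n) U := by
  induction n with
  | zero => exact hr₃
  | succ n ih => exact contDiffOn_Aop hU hr₁ hr₂ ih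

lemma contDiffOn_E12 (hU : IsOpen U) (hr₁ : ContDiffOn ℝ (⊤ : ℕ∞) r₁ U) (hr₂ : ContDiffOn ℝ (⊤ : ℕ∞) r₂ U) :
    ContDiffOn ℝ (⊤ : ℕ∞) (fun p => (pt r₂ p + (r₁ p + r₂ p - 1) * px r₂ p)
      - (pt r₁ p + (r₁ p + r₂ p + 1) * px r₁ p)) U := by
  have h1 : ContDiffOn ℝ (⊤ : ℕ∞) (pt r₁) U := contDiffOn_D hU hr₁ (1,0)
  have h2 : ContDiffOn ℝ (⊤ : ℕ∞) (pt r₂) U := contDiffOn_D hU hr₂ (1,0)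
  have h3 : ContDiffOn ℝ (⊤ : ℕ∞) (px r₁) U := contDiffOn_D hU hr₁ (0,1)
  have h4 : ContDiffOn ℝ (⊤ : ℕ∞) (px r₂) U := contDiffOn_D hU hr₂ (0,1)
  exact (h2.add (((hr₁.add hr₂).sub contDiffOn_const).mul h4)).sub
    (h1.add (((hr₁.add hr₂).add contDiffOn_const).mul h3))

/-- The key commutator identity B∘A = A∘B + (E₂−E₁)·A on smooth functions. -/
lemma comm_BA (hU : IsOpen U) (hr₁ : ContDiffOn ℝ (⊤ : ℕ∞) r₁ U) (hr₂ : ContDiffOn ℝ (⊤ : ℕ∞) r₂ U)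
    {f : ℝ×ℝ→ℝ} (hf : ContDiffOn ℝ (⊤ : ℕ∞) f U) {p : ℝ×ℝ} (hp : p ∈ U) :
    Bop r₁ r₂ (Aop r₁ r₂ f) p = Aop r₁ r₂ (Bop r₁ r₂ f) p +
      ((pt r₂ p + (r₁ p + r₂ p - 1) * px r₂ p)
        - (pt r₁ p + (r₁ p + r₂ p + 1) * px r₁ p)) * Aop r₁ r₂ f p := by
  have hd1 : DifferentiableAt ℝ r₁ p := diffAt hU hr₁ hp
  have hd2 : DifferentiableAt ℝ r₂ p := diffAt hU hr₂ hp
  have hde : DifferentiableAt ℝ (fun q => Real.exp (r₂ q - r₁ q)) p :=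
    diffAt hU (contDiffOn_e hr₁ hr₂) hp
  have hdfx : DifferentiableAt ℝ (D (0,1) f) p := diffAt hU (contDiffOn_D hU hf (0,1)) hp
  have hdft : DifferentiableAt ℝ (D (1,0) f) p := diffAt hU (contDiffOn_D hU hf (1,0)) hp
  -- derivative of e
  have hDe : ∀ v, D v (fun q => Real.exp (r₂ q - r₁ q)) p
      = Real.exp (r₂ p - r₁ p) * (D v r₂ p - D v r₁ p) := by
    intro v
    rw [D_exp (hd2.fun_sub hd1) v, D_sub hd2 hd1 v]
  -- derivative of A f
  have h1 : ∀ v, D v (Aop r₁ r₂ f) p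
      = Real.exp (r₂ p - r₁ p) * (D v r₂ p - D v r₁ p) * D (0,1) f p
        + Real.exp (r₂ p - r₁ p) * D v (D (0,1) f) p := by
    intro v
    rw [show Aop r₁ r₂ f = fun q => (fun q' => Real.exp (r₂ q' - r₁ q')) q * D (0,1) f q from rfl,
      D_mul hde hdfx v, hDe v]
  -- derivative of B f in x direction
  have h2 : D (0,1) (Bop r₁ r₂ f) p
      = D (0,1) (D (1,0) f) p + ((D (0,1) r₁ p + D (0,1) r₂ p) * D (0,1) f p
        + (r₁ p + r₂ p) * D (0,1) (D (0,1) f) p) := by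
    rw [show Bop r₁ r₂ f = fun q => D (1,0) f q
        + (fun q' => (r₁ q' + r₂ q') * D (0,1) f q') q from rfl,
      D_add hdft ((hd1.fun_add hd2).fun_mul hdfx) (0,1),
      D_mul (hd1.fun_add hd2) hdfx (0,1), D_add hd1 hd2 (0,1)]
  have hcomm : D (0,1) (D (1,0) f) p = D (1,0) (D (0,1) f) p := D_comm hU hf hp _ _
  show D (1,0) (Aop r₁ r₂ f) p + (r₁ p + r₂ p) * D (0,1) (Aop r₁ r₂ f) p
      = Real.exp (r₂ p - r₁ p) * D (0,1) (Bop r₁ r₂ f) p + _ * (Real.exp (r₂ p - r₁ p) * D (0,1) f p)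
  rw [h1 (1,0), h1 (0,1), h2, hcomm]
  show _ = _ + ((D (1,0) r₂ p + (r₁ p + r₂ p - 1) * D (0,1) r₂ p)
      - (D (1,0) r₁ p + (r₁ p + r₂ p + 1) * D (0,1) r₁ p)) * (Real.exp (r₂ p - r₁ p) * D (0,1) f p)
  ring
end main

theorem B_omega_identity
    (U : Set (ℝ × ℝ)) (hU : IsOpen U)
    (r₁ r₂ r₃ : ℝ × ℝ → ℝ)
    (hr₁ : ContDiffOn ℝ (⊤ : ℕ∞) r₁ U) (hr₂ : ContDiffOn ℝ (⊤ : ℕ∞) r₂ U)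
    (hr₃ : ContDiffOn ℝ (⊤ : ℕ∞) r₃ U) :
    let E₁ : ℝ × ℝ → ℝ := fun p => pt r₁ p + (r₁ p + r₂ p + 1) * px r₁ p
    let E₂ : ℝ × ℝ → ℝ := fun p => pt r₂ p + (r₁ p + r₂ p - 1) * px r₂ p
    let E₃ : ℝ × ℝ → ℝ := fun p => pt r₃ p + (r₁ p + r₂ p) * px r₃ p
    ∀ (κ : ℕ), ∀ p ∈ U,
      Bop r₁ r₂ (omegaFun r₁ r₂ r₃ κ) p =
        ((Aop r₁ r₂)^[κ] E₃) p +
          ∑ κ' ∈ Finset.range κ,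
            ((Aop r₁ r₂)^[κ']
              (fun q => (E₂ q - E₁ q) * omegaFun r₁ r₂ r₃ (κ - κ') q)) p := by
  intro E₁ E₂ E₃ κ
  have hE12 : ContDiffOn ℝ (⊤ : ℕ∞) (fun q => E₂ q - E₁ q) U := contDiffOn_E12 hU hr₁ hr₂
  have hω : ∀ n, ContDiffOn ℝ (⊤ : ℕ∞) (omegaFun r₁ r₂ r₃ n) U :=
    contDiffOn_omega hU hr₁ hr₂ hr₃
  have hg : ∀ n, ContDiffOn ℝ (⊤ : ℕ∞) (fun q => (E₂ q - E₁ q) * omegaFun r₁ r₂ r₃ n q) U :=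
    fun n => hE12.mul (hω n)
  have hE₃ : ContDiffOn ℝ (⊤ : ℕ∞) E₃ U :=
    (contDiffOn_D hU hr₃ (1,0)).add ((hr₁.add hr₂).mul (contDiffOn_D hU hr₃ (0,1)))
  induction κ with
  | zero =>
    intro p hp
    simp only [omegaFun, Function.iterate_zero, id_eq, Finset.range_zero,
      Finset.sum_empty, add_zero]
    rfl
  | succ κ ih =>
    intro p hp
    -- the commutator step
    have step1 : Bop r₁ r₂ (omegaFun r₁ r₂ r₃ (κ+1)) p
        = Aop r₁ r₂ (Bop r₁ r₂ (omegaFun r₁ r₂ r₃ κ)) p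
          + (E₂ p - E₁ p) * omegaFun r₁ r₂ r₃ (κ+1) p := by
      have := comm_BA hU hr₁ hr₂ (hω κ) hp
      simpa [omegaFun] using this
    -- replace B ω_κ by the RHS of the induction hypothesis inside A
    set F : ℝ × ℝ → ℝ := fun q => ((Aop r₁ r₂)^[κ] E₃) q +
        ∑ κ' ∈ Finset.range κ,
          ((Aop r₁ r₂)^[κ'] (fun q' => (E₂ q' - E₁ q') * omegaFun r₁ r₂ r₃ (κ - κ') q')) q
      with hF
    have step2 : Aop r₁ r₂ (Bop r₁ r₂ (omegaFun r₁ r₂ r₃ κ)) p = Aop r₁ r₂ F p := by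
      have hev : Bop r₁ r₂ (omegaFun r₁ r₂ r₃ κ) =ᶠ[nhds p] F := by
        filter_upwards [hU.mem_nhds hp] with q hq using ih q hq
      show Real.exp (r₂ p - r₁ p) * D (0,1) _ p = Real.exp (r₂ p - r₁ p) * D (0,1) F p
      rw [D_congr_nhds hev]
    -- linearity of A on the sum
    have step3 : Aop r₁ r₂ F p = Aop r₁ r₂ ((Aop r₁ r₂)^[κ] E₃) p +
        ∑ κ' ∈ Finset.range κ, Aop r₁ r₂
          ((Aop r₁ r₂)^[κ'] (fun q' => (E₂ q' - E₁ q') * omegaFun r₁ r₂ r₃ (κ - κ') q')) p := by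
      have hd1 : DifferentiableAt ℝ ((Aop r₁ r₂)^[κ] E₃) p :=
        diffAt hU (contDiffOn_iterA hU hr₁ hr₂ hE₃ κ) hp
      have hd2 : ∀ κ' ∈ Finset.range κ, DifferentiableAt ℝ
          ((Aop r₁ r₂)^[κ'] (fun q' => (E₂ q' - E₁ q') * omegaFun r₁ r₂ r₃ (κ - κ') q')) p :=
        fun κ' _ => diffAt hU (contDiffOn_iterA hU hr₁ hr₂ (hg (κ - κ')) κ') hp
      have hd2' : DifferentiableAt ℝ (fun q => ∑ κ' ∈ Finset.range κ,
          ((Aop r₁ r₂)^[κ'] (fun q' => (E₂ q' - E₁ q') * omegaFun r₁ r₂ r₃ (κ - κ') q')) q) p :=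
        DifferentiableAt.fun_sum fun i hi => hd2 i hi
      show Real.exp (r₂ p - r₁ p) * D (0,1) F p = _
      rw [hF, D_add hd1 hd2' (0,1), D_sum hd2 (0,1), mul_add, Finset.mul_sum]
      rfl
    rw [step1, step2, step3]
    -- now reassemble using iterate_succ and sum reindexing
    rw [Finset.sum_range_succ' (fun κ' => ((Aop r₁ r₂)^[κ']
        (fun q => (E₂ q - E₁ q) * omegaFun r₁ r₂ r₃ (κ + 1 - κ') q)) p) κ]
    simp only [Function.iterate_zero, id_eq, Nat.sub_zero]
    rw [← Function.iterate_succ_apply' (Aop r₁ r₂) κ E₃]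
    have hre : ∀ κ' ∈ Finset.range κ,
        ((Aop r₁ r₂)^[κ' + 1] (fun q => (E₂ q - E₁ q) * omegaFun r₁ r₂ r₃ (κ + 1 - (κ' + 1)) q)) p
        = Aop r₁ r₂ ((Aop r₁ r₂)^[κ']
            (fun q' => (E₂ q' - E₁ q') * omegaFun r₁ r₂ r₃ (κ - κ') q')) p := by
      intro κ' _
      rw [Function.iterate_succ_apply']
      norm_num [Nat.succ_sub_succ]
    rw [Finset.sum_congr rfl hre]
    ring

end
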